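/- arXiv:2309.08808 — 2 statements merged into one kernel-verified Lean document; each statement's English description precedes it below -/
import Mathlib

section
/- Let T > 0 be a real number and let σ(1), σ(0) ≥ 0 be real numbers, not both zero. Define V(T₁, T₀) = σ(1)²/T₁ + σ(0)²/T₀ for T₁, T₀ > 0, and define the clairvoyant optimum V* = (σ(1) + σ(0))²/T. Then: (i) for the half–half allocation T₁ = T₀ = T/2, for every admissible pair (σ(1), σ(0)) one has V(T/2, T/2)/V* ≤ 2, with equality whenever σ(1) = 0 or σ(0) = 0, so the supremum over (σ(1), σ(0)) of V(T/2, T/2)/V* equals 2; and (ii) for any allocation T₁, T₀ > 0 with T₁ + T₀ = T and T₁ ≠ T/2, the supremum over (σ(1), σ(0)) not both zero of V(T₁, T₀)/V* equals max{T/T₁, T/T₀} > 2. Consequently T₁ = T₀ = T/2 is the unique minimizer of the worst-case ratio. -/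
/-!
The ratio `V / V*` equals `(σ(1)² · T / T₁ + σ(0)² · T / T₀) / (σ(1) + σ(0))²`. Since
`(σ(1) + σ(0))² ≥ σ(1)² + σ(0)²` for nonnegative `σ`, it is at most `max (T / T₁) (T / T₀)`,
and this bound is attained by putting all the variance in one arm.
For `T₁ + T₀ = T` the bound is `2` only when `T₁ = T₀ = T / 2`.
-/

/-- `V(T₁, T₀) / V*` with `σ₁ = σ(1)` and `σ₀ = σ(0)`. -/
noncomputable def proxyMSERatio (T T₁ T₀ σ₁ σ₀ : ℝ) : ℝ :=
  (σ₁ ^ 2 / T₁ + σ₀ ^ 2 / T₀) / ((σ₁ + σ₀) ^ 2 / T)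

def proxyMSERatioSet (T T₁ T₀ : ℝ) : Set ℝ :=
  {r | ∃ σ₁ σ₀ : ℝ, 0 ≤ σ₁ ∧ 0 ≤ σ₀ ∧ 0 < σ₁ + σ₀ ∧ r = proxyMSERatio T T₁ T₀ σ₁ σ₀}

section

variable {T T₁ T₀ σ₁ σ₀ M : ℝ}

lemma proxyMSERatio_eq :
    proxyMSERatio T T₁ T₀ σ₁ σ₀ = (σ₁ ^ 2 * (T / T₁) + σ₀ ^ 2 * (T / T₀)) / (σ₁ + σ₀) ^ 2 := by
  simp only [proxyMSERatio, div_div_eq_mul_div, mul_div_assoc', add_mul, div_mul_eq_mul_div]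

lemma proxyMSERatio_le (hσ₁ : 0 ≤ σ₁) (hσ₀ : 0 ≤ σ₀) (hM : 0 ≤ M)
    (h₁ : T / T₁ ≤ M) (h₀ : T / T₀ ≤ M) : proxyMSERatio T T₁ T₀ σ₁ σ₀ ≤ M := by
  rw [proxyMSERatio_eq]
  apply div_le_of_le_mul₀ (sq_nonneg _) hM
  calc σ₁ ^ 2 * (T / T₁) + σ₀ ^ 2 * (T / T₀) ≤ σ₁ ^ 2 * M + σ₀ ^ 2 * M := by gcongr
    _ = M * (σ₁ ^ 2 + σ₀ ^ 2) := by ring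
    _ ≤ M * (σ₁ + σ₀) ^ 2 := by gcongr; nlinarith [mul_nonneg hσ₁ hσ₀]

lemma proxyMSERatio_right_zero (hσ₁ : σ₁ ≠ 0) : proxyMSERatio T T₁ T₀ σ₁ 0 = T / T₁ := by
  simp only [proxyMSERatio, add_zero, ne_eq, OfNat.ofNat_ne_zero, not_false_eq_true, zero_pow,
    zero_div]
  exact div_div_div_cancel_left' _ _ (pow_ne_zero 2 hσ₁)

lemma proxyMSERatio_left_zero (hσ₀ : σ₀ ≠ 0) : proxyMSERatio T T₁ T₀ 0 σ₀ = T / T₀ := by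
  simp only [proxyMSERatio, zero_add, ne_eq, OfNat.ofNat_ne_zero, not_false_eq_true, zero_pow,
    zero_div]
  exact div_div_div_cancel_left' _ _ (pow_ne_zero 2 hσ₀)

lemma isGreatest_proxyMSERatioSet (hM : 0 ≤ max (T / T₁) (T / T₀)) :
    IsGreatest (proxyMSERatioSet T T₁ T₀) (max (T / T₁) (T / T₀)) := by
  refine ⟨?_, ?_⟩
  · rcases max_choice (T / T₁) (T / T₀) with h | h <;> rw [h]
    · exact ⟨1, 0, zero_le_one, le_rfl, by norm_num, (proxyMSERatio_right_zero one_ne_zero).symm⟩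
    · exact ⟨0, 1, le_rfl, zero_le_one, by norm_num, (proxyMSERatio_left_zero one_ne_zero).symm⟩
  · rintro r ⟨σ₁, σ₀, hσ₁, hσ₀, -, rfl⟩
    exact proxyMSERatio_le hσ₁ hσ₀ hM (le_max_left _ _) (le_max_right _ _)

lemma two_lt_max_div (hT₁ : 0 < T₁) (hT₀ : 0 < T₀) (hsum : T₁ + T₀ = T) (hne : T₁ ≠ T / 2) :
    2 < max (T / T₁) (T / T₀) := by
  rcases hne.lt_or_gt with hlt | hgt
  · exact lt_max_of_lt_left (by rw [lt_div_iff₀ hT₁]; linarith)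
  · exact lt_max_of_lt_right (by rw [lt_div_iff₀ hT₀]; linarith)

end

/-- Single-stage Neyman allocation: the half–half allocation is the unique
minimizer of the worst-case ratio of the proxy mean squared error to the
clairvoyant optimum. -/
theorem single_stage_neyman_allocation (T : ℝ) (hT : 0 < T) :
    (∀ σ1 σ0 : ℝ, 0 ≤ σ1 → 0 ≤ σ0 → 0 < σ1 + σ0 →
        (σ1 ^ 2 / (T / 2) + σ0 ^ 2 / (T / 2)) / ((σ1 + σ0) ^ 2 / T) ≤ 2) ∧
    (∀ σ1 σ0 : ℝ, 0 ≤ σ1 → 0 ≤ σ0 → 0 < σ1 + σ0 → (σ1 = 0 ∨ σ0 = 0) →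
        (σ1 ^ 2 / (T / 2) + σ0 ^ 2 / (T / 2)) / ((σ1 + σ0) ^ 2 / T) = 2) ∧
    IsLUB {r : ℝ | ∃ σ1 σ0 : ℝ, 0 ≤ σ1 ∧ 0 ≤ σ0 ∧ 0 < σ1 + σ0 ∧
        r = (σ1 ^ 2 / (T / 2) + σ0 ^ 2 / (T / 2)) / ((σ1 + σ0) ^ 2 / T)} 2 ∧
    (∀ T1 T0 : ℝ, 0 < T1 → 0 < T0 → T1 + T0 = T → T1 ≠ T / 2 →
        IsLUB {r : ℝ | ∃ σ1 σ0 : ℝ, 0 ≤ σ1 ∧ 0 ≤ σ0 ∧ 0 < σ1 + σ0 ∧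
            r = (σ1 ^ 2 / T1 + σ0 ^ 2 / T0) / ((σ1 + σ0) ^ 2 / T)}
          (max (T / T1) (T / T0)) ∧
        2 < max (T / T1) (T / T0)) := by
  have hhalf : T / (T / 2) = 2 := by field_simp
  have hhalf_greatest : IsGreatest (proxyMSERatioSet T (T / 2) (T / 2)) 2 := by
    have h := isGreatest_proxyMSERatioSet (T₁ := T / 2) (T₀ := T / 2) (by positivity)
    rwa [max_self, hhalf] at h
  refine ⟨fun σ1 σ0 h1 h0 hs ↦ hhalf_greatest.2 ⟨σ1, σ0, h1, h0, hs, rfl⟩, ?_,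
    hhalf_greatest.isLUB, fun T1 T0 hT1 hT0 hsum hne ↦
      ⟨(isGreatest_proxyMSERatioSet (by positivity)).isLUB,
        two_lt_max_div hT1 hT0 hsum hne⟩⟩
  rintro σ1 σ0 - - hs (rfl | rfl)
  · exact (proxyMSERatio_left_zero (by simpa using hs.ne')).trans hhalf
  · exact (proxyMSERatio_right_zero (by simpa using hs.ne')).trans hhalf
end

section
/- Let n ≥ 3 be an integer and let Y₁, …, Yₙ be independent, identically distributed real-valued random variables, each distributed as a random variable Y with finite fourth moment and variance σ² > 0. Let κ = E[(Y − E[Y])⁴]/σ⁴ and let σ̂² = (1/(n−1))·Σᵢ₌₁ⁿ (Yᵢ − (1/n)Σⱼ₌₁ⁿ Yⱼ)² be the sample variance estimator. Then for every δ > 0, P(|σ̂² − σ²| ≥ δ) ≤ κ·σ⁴/(δ²·n). -/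
open MeasureTheory ProbabilityTheory Finset

/-! After centring, `(N - 1) σ̂² = Q - S² / N` with `Q = ∑ Xᵢ²` and `S = ∑ Xᵢ`, so `σ̂²` is
unbiased and `Var σ̂²` is a combination of `Var Q`, `cov(Q, S²)` and `Var S²`. The first is a sum of
variances; the other two reduce to the moments `E[Xᵢ S³]` and `E[Xᵢ² S²]`, computed by writing
`S = Xᵢ + (S - Xᵢ)` as a sum of two independent terms and expanding binomially. With
`m₄ = E[Xᵢ⁴]` this gives `Var σ̂² = m₄ / N - σ⁴ (N - 3) / (N (N - 1)) ≤ m₄ / N` for `N ≥ 3`,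
and Chebyshev's inequality concludes. -/

noncomputable def sampleVariance {ι : Type*} [Fintype ι] (y : ι → ℝ) : ℝ :=
  1 / ((Fintype.card ι : ℝ) - 1) * ∑ i, (y i - 1 / (Fintype.card ι : ℝ) * ∑ j, y j) ^ 2

section SampleVariance

variable {ι : Type*} [Fintype ι]

theorem sampleVariance_sub_const (y : ι → ℝ) (c : ℝ) :
    sampleVariance (fun i => y i - c) = sampleVariance y := by
  rcases isEmpty_or_nonempty ι with hι | hι
  · simp [sampleVariance]
  have hN : (Fintype.card ι : ℝ) ≠ 0 := by positivity
  simp only [sampleVariance, sum_sub_distrib, sum_const, card_univ, nsmul_eq_mul]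
  congr 2 with i
  field_simp
  ring

theorem sampleVariance_eq_sum_sq_sub (y : ι → ℝ) :
    sampleVariance y = 1 / ((Fintype.card ι : ℝ) - 1) *
      (∑ i, y i ^ 2 - 1 / (Fintype.card ι : ℝ) * (∑ i, y i) ^ 2) := by
  rcases isEmpty_or_nonempty ι with hι | hι
  · simp [sampleVariance]
  have hN : (Fintype.card ι : ℝ) ≠ 0 := by positivity
  simp only [sampleVariance, sub_sq, sum_add_distrib, sum_sub_distrib, ← sum_mul, ← mul_sum,
    sum_const, card_univ, nsmul_eq_mul]
  field_simp
  ring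

end SampleVariance

section

variable {Ω ι : Type*} [MeasurableSpace Ω] {μ : Measure Ω}

lemma integrable_pow_mul_pow [IsFiniteMeasure μ] {f g : Ω → ℝ} {r : ℕ} (hf : MemLp f r μ)
    (hg : MemLp g r μ) {p q : ℕ} (hpq : p + q ≤ r) :
    Integrable (fun ω => f ω ^ p * g ω ^ q) μ := by
  have hM : MemLp (fun ω => 1 + ‖f ω‖ + ‖g ω‖) r μ :=
    ((memLp_const (1 : ℝ)).add hf.norm).add hg.norm
  have hMr : Integrable (fun ω => ‖1 + ‖f ω‖ + ‖g ω‖‖ ^ r) μ := hM.integrable_norm_pow'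
  refine hMr.mono' ((hf.1.pow p).mul (hg.1.pow q)) (.of_forall fun ω => ?_)
  have hf1 : ‖f ω‖ ≤ 1 + ‖f ω‖ + ‖g ω‖ := by linarith [norm_nonneg (g ω)]
  have hg1 : ‖g ω‖ ≤ 1 + ‖f ω‖ + ‖g ω‖ := by linarith [norm_nonneg (f ω)]
  have h1 : 1 ≤ 1 + ‖f ω‖ + ‖g ω‖ := by linarith [norm_nonneg (f ω), norm_nonneg (g ω)]
  rw [norm_mul, norm_pow, norm_pow, Real.norm_of_nonneg (zero_le_one.trans h1)]
  calc ‖f ω‖ ^ p * ‖g ω‖ ^ q ≤ (1 + ‖f ω‖ + ‖g ω‖) ^ p * (1 + ‖f ω‖ + ‖g ω‖) ^ q := by gcongr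
    _ ≤ (1 + ‖f ω‖ + ‖g ω‖) ^ r := by rw [← pow_add]; exact pow_le_pow_right₀ h1 hpq

lemma MeasureTheory.MemLp.sq {f : Ω → ℝ} (hf : MemLp f 4 μ) :
    MemLp (fun ω => f ω ^ 2) 2 μ := by
  refine (memLp_two_iff_integrable_sq (hf.1.pow 2)).2 ?_
  simpa [← pow_mul, Even.pow_abs ⟨2, rfl⟩] using hf.integrable_norm_pow (p := 4) (by norm_num)

lemma ProbabilityTheory.IndepFun.integral_pow_mul_add_pow [IsFiniteMeasure μ] {X R : Ω → ℝ}
    {r : ℕ} (hXR : IndepFun X R μ) (hX : MemLp X r μ) (hR : MemLp R r μ) {p q : ℕ}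
    (hpq : p + q ≤ r) :
    ∫ ω, X ω ^ p * (X ω + R ω) ^ q ∂μ =
      ∑ m ∈ range (q + 1), (∫ ω, X ω ^ (p + m) ∂μ) * (∫ ω, R ω ^ (q - m) ∂μ) * q.choose m := by
  have hterm : ∀ m ∈ range (q + 1),
      ∫ ω, X ω ^ (p + m) * R ω ^ (q - m) * q.choose m ∂μ =
        (∫ ω, X ω ^ (p + m) ∂μ) * (∫ ω, R ω ^ (q - m) ∂μ) * q.choose m := by
    intro m _
    rw [integral_mul_const]
    exact congrArg (· * _) <| (hXR.comp (measurable_id.pow_const (p + m))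
      (measurable_id.pow_const (q - m))).integral_fun_mul_eq_mul_integral (hX.1.pow _) (hR.1.pow _)
  simp_rw [add_pow, mul_sum, ← mul_assoc, ← pow_add]
  rw [integral_finsetSum _ fun m hm => ?_]
  · exact sum_congr rfl hterm
  · exact (integrable_pow_mul_pow hX hR (by have := mem_range.1 hm; omega)).mul_const _

variable {X : ι → Ω → ℝ} {v m₄ : ℝ}

lemma integral_sum_eq_zero (hX : ∀ i, Integrable (X i) μ) (h1 : ∀ i, μ[X i] = 0)
    (t : Finset ι) : ∫ ω, ∑ i ∈ t, X i ω ∂μ = 0 := by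
  simp [integral_finsetSum t fun i _ => hX i, h1]

lemma integral_sq_sum_eq_card_mul [IsFiniteMeasure μ] (hX : ∀ i, MemLp (X i) 2 μ)
    (hind : Pairwise fun i j => IndepFun (X i) (X j) μ) (h1 : ∀ i, μ[X i] = 0)
    (h2 : ∀ i, ∫ ω, X i ω ^ 2 ∂μ = v) (t : Finset ι) :
    ∫ ω, (∑ i ∈ t, X i ω) ^ 2 ∂μ = #t * v := by
  have hmean : μ[∑ i ∈ t, X i] = 0 := by
    simpa using integral_sum_eq_zero (fun i => (hX i).integrable one_le_two) h1 t
  calc ∫ ω, (∑ i ∈ t, X i ω) ^ 2 ∂μ = Var[∑ i ∈ t, X i; μ] := by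
        rw [variance_of_integral_eq_zero (memLp_finsetSum' t fun i _ => hX i).aemeasurable hmean]
        simp
    _ = ∑ i ∈ t, Var[X i; μ] :=
        IndepFun.variance_sum (fun i _ => hX i) fun i _ j _ hij => hind hij
    _ = #t * v := by
        simp [variance_of_integral_eq_zero (hX _).aemeasurable (h1 _), h2]

lemma integral_pow_mul_pow_sum [IsFiniteMeasure μ] [Fintype ι] [DecidableEq ι]
    (hX : ∀ i, MemLp (X i) 4 μ) (hind : iIndepFun X μ) (i : ι) {p q : ℕ} (hpq : p + q ≤ 4) :
    ∫ ω, X i ω ^ p * (∑ j, X j ω) ^ q ∂μ =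
      ∑ m ∈ range (q + 1), (∫ ω, X i ω ^ (p + m) ∂μ) *
        (∫ ω, (∑ j ∈ univ.erase i, X j ω) ^ (q - m) ∂μ) * q.choose m := by
  have hR : MemLp (fun ω => ∑ j ∈ univ.erase i, X j ω) 4 μ := memLp_finsetSum _ fun j _ => hX j
  have hXR : IndepFun (X i) (fun ω => ∑ j ∈ univ.erase i, X j ω) μ := by
    have := hind.indepFun_finsetSum_of_notMem₀ (fun j => (hX j).aemeasurable) (notMem_erase i univ)
    rw [Finset.sum_fn] at this
    exact this.symm
  simp_rw [← add_sum_erase univ _ (mem_univ i)]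
  exact hXR.integral_pow_mul_add_pow (r := 4) (hX i) hR hpq

section FourthMoments

variable [IsProbabilityMeasure μ] [Fintype ι]

lemma integral_mul_cube_sum (hX : ∀ i, MemLp (X i) 4 μ) (hind : iIndepFun X μ)
    (h1 : ∀ i, μ[X i] = 0) (h2 : ∀ i, ∫ ω, X i ω ^ 2 ∂μ = v)
    (h4 : ∀ i, ∫ ω, X i ω ^ 4 ∂μ = m₄) (i : ι) :
    ∫ ω, X i ω * (∑ j, X j ω) ^ 3 ∂μ = m₄ + 3 * (Fintype.card ι - 1) * v ^ 2 := by
  classical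
  have hR1 := integral_sum_eq_zero (fun j => (hX j).integrable (by norm_num)) h1 (univ.erase i)
  have hR2 := integral_sq_sum_eq_card_mul (fun j => (hX j).mono_exponent (by norm_num))
    (fun _ _ hjk => hind.indepFun hjk) h1 h2 (univ.erase i)
  have := integral_pow_mul_pow_sum hX hind i (p := 1) (q := 3) (by norm_num)
  simp only [sum_range_succ, sum_range_zero, Nat.reduceAdd, Nat.reduceSub, pow_one, pow_zero,
    hR1, hR2, h1, h2, h4, integral_const, probReal_univ, smul_eq_mul] at this
  rw [this, card_erase_of_mem (mem_univ i), card_univ, Nat.cast_pred (Fintype.card_pos_iff.2 ⟨i⟩)]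
  norm_num [Nat.choose]
  ring

lemma integral_sq_mul_sq_sum (hX : ∀ i, MemLp (X i) 4 μ) (hind : iIndepFun X μ)
    (h1 : ∀ i, μ[X i] = 0) (h2 : ∀ i, ∫ ω, X i ω ^ 2 ∂μ = v)
    (h4 : ∀ i, ∫ ω, X i ω ^ 4 ∂μ = m₄) (i : ι) :
    ∫ ω, X i ω ^ 2 * (∑ j, X j ω) ^ 2 ∂μ = m₄ + (Fintype.card ι - 1) * v ^ 2 := by
  classical
  have hR1 := integral_sum_eq_zero (fun j => (hX j).integrable (by norm_num)) h1 (univ.erase i)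
  have hR2 := integral_sq_sum_eq_card_mul (fun j => (hX j).mono_exponent (by norm_num))
    (fun _ _ hjk => hind.indepFun hjk) h1 h2 (univ.erase i)
  have := integral_pow_mul_pow_sum hX hind i (p := 2) (q := 2) (by norm_num)
  simp only [sum_range_succ, sum_range_zero, Nat.reduceAdd, Nat.reduceSub, pow_one, pow_zero,
    hR1, hR2, h2, h4, integral_const, probReal_univ, smul_eq_mul] at this
  rw [this, card_erase_of_mem (mem_univ i), card_univ, Nat.cast_pred (Fintype.card_pos_iff.2 ⟨i⟩)]
  norm_num [Nat.choose]
  ring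

lemma integral_pow_four_sum (hX : ∀ i, MemLp (X i) 4 μ) (hind : iIndepFun X μ)
    (h1 : ∀ i, μ[X i] = 0) (h2 : ∀ i, ∫ ω, X i ω ^ 2 ∂μ = v)
    (h4 : ∀ i, ∫ ω, X i ω ^ 4 ∂μ = m₄) :
    ∫ ω, (∑ j, X j ω) ^ 4 ∂μ = Fintype.card ι * (m₄ + 3 * (Fintype.card ι - 1) * v ^ 2) := by
  have hS : MemLp (fun ω => ∑ j, X j ω) 4 μ := memLp_finsetSum _ fun j _ => hX j
  have hsplit : ∀ ω, (∑ j, X j ω) ^ 4 = ∑ i, X i ω * (∑ j, X j ω) ^ 3 := fun ω => by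
    rw [← sum_mul]; ring
  simp_rw [hsplit]
  rw [integral_finsetSum _ fun i _ => by
    simpa using integrable_pow_mul_pow (r := 4) (p := 1) (q := 3) (hX i) hS (by norm_num)]
  simp only [integral_mul_cube_sum hX hind h1 h2 h4, sum_const, card_univ, nsmul_eq_mul]

lemma integral_sum_sq_mul_sq_sum (hX : ∀ i, MemLp (X i) 4 μ) (hind : iIndepFun X μ)
    (h1 : ∀ i, μ[X i] = 0) (h2 : ∀ i, ∫ ω, X i ω ^ 2 ∂μ = v)
    (h4 : ∀ i, ∫ ω, X i ω ^ 4 ∂μ = m₄) :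
    ∫ ω, (∑ i, X i ω ^ 2) * (∑ j, X j ω) ^ 2 ∂μ =
      Fintype.card ι * (m₄ + (Fintype.card ι - 1) * v ^ 2) := by
  have hS : MemLp (fun ω => ∑ j, X j ω) 4 μ := memLp_finsetSum _ fun j _ => hX j
  simp_rw [sum_mul]
  rw [integral_finsetSum _ fun i _ =>
    integrable_pow_mul_pow (r := 4) (p := 2) (q := 2) (hX i) hS (by norm_num)]
  simp only [integral_sq_mul_sq_sum hX hind h1 h2 h4, sum_const, card_univ, nsmul_eq_mul]

end FourthMoments

lemma memLp_sampleVariance [Fintype ι] (hX : ∀ i, MemLp (X i) 4 μ) :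
    MemLp (fun ω => sampleVariance fun i => X i ω) 2 μ := by
  simp_rw [sampleVariance_eq_sum_sq_sub]
  exact ((memLp_finsetSum _ fun i _ => (hX i).sq).sub
    ((memLp_finsetSum _ fun i _ => hX i).sq.const_mul _)).const_mul _

lemma integral_sampleVariance [IsProbabilityMeasure μ] [Fintype ι] (hN : 2 ≤ Fintype.card ι)
    (hX : ∀ i, MemLp (X i) 2 μ) (hind : Pairwise fun i j => IndepFun (X i) (X j) μ)
    (h1 : ∀ i, μ[X i] = 0) (h2 : ∀ i, ∫ ω, X i ω ^ 2 ∂μ = v) :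
    ∫ ω, sampleVariance (fun i => X i ω) ∂μ = v := by
  have hN1 : (Fintype.card ι : ℝ) - 1 ≠ 0 := by
    have : (2 : ℝ) ≤ Fintype.card ι := by exact_mod_cast hN
    linarith
  simp_rw [sampleVariance_eq_sum_sq_sub]
  rw [integral_const_mul, integral_sub (integrable_finsetSum _ fun i _ => (hX i).integrable_sq)
    ((memLp_finsetSum _ fun i _ => hX i).integrable_sq.const_mul _), integral_const_mul,
    integral_finsetSum _ fun i _ => (hX i).integrable_sq, integral_sq_sum_eq_card_mul hX hind h1 h2]
  simp only [h2, sum_const, card_univ, nsmul_eq_mul]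
  field_simp

lemma variance_sampleVariance [IsProbabilityMeasure μ] [Fintype ι] (hN : 2 ≤ Fintype.card ι)
    (hX : ∀ i, MemLp (X i) 4 μ) (hind : iIndepFun X μ)
    (h1 : ∀ i, μ[X i] = 0) (h2 : ∀ i, ∫ ω, X i ω ^ 2 ∂μ = v)
    (h4 : ∀ i, ∫ ω, X i ω ^ 4 ∂μ = m₄) :
    Var[fun ω => sampleVariance fun i => X i ω; μ] =
      m₄ / Fintype.card ι - v ^ 2 * (Fintype.card ι - 3) /
        (Fintype.card ι * (Fintype.card ι - 1)) := by
  simp_rw [sampleVariance_eq_sum_sq_sub]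
  have hN2 : (2 : ℝ) ≤ Fintype.card ι := by exact_mod_cast hN
  set N : ℝ := (Fintype.card ι : ℝ)
  have hN0 : N ≠ 0 := by positivity
  have hN1 : N - 1 ≠ 0 := by linarith
  have hX2 : ∀ i, MemLp (X i) 2 μ := fun i => (hX i).mono_exponent (by norm_num)
  have hpair : Pairwise fun i j => IndepFun (X i) (X j) μ := fun _ _ hij => hind.indepFun hij
  set Q : Ω → ℝ := fun ω => ∑ i, X i ω ^ 2
  set S : Ω → ℝ := fun ω => (∑ i, X i ω) ^ 2
  have hQ : MemLp Q 2 μ := memLp_finsetSum _ fun i _ => (hX i).sq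
  have hS : MemLp S 2 μ := (memLp_finsetSum _ fun i _ => hX i).sq
  have hEQ : μ[Q] = N * v := by
    simp [Q, integral_finsetSum _ fun i _ => (hX2 i).integrable_sq, h2, N]
  have hES : μ[S] = N * v := integral_sq_sum_eq_card_mul hX2 hpair h1 h2 univ
  have hVarQ : Var[Q; μ] = N * (m₄ - v ^ 2) := by
    have hsum : Q = ∑ i, fun ω => X i ω ^ 2 := by ext; simp [Q]
    rw [hsum, IndepFun.variance_sum (fun i _ => (hX i).sq) fun i _ j _ hij =>
      (hind.indepFun hij).comp (measurable_id.pow_const 2) (measurable_id.pow_const 2)]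
    simp [variance_eq_sub, (hX _).sq, ← pow_mul, h2, h4, N, mul_sub]
  have hCov : cov[Q, S; μ] = N * (m₄ - v ^ 2) := by
    rw [covariance_eq_sub hQ hS, hEQ, hES]
    simp only [Pi.mul_apply, Q, S]
    rw [integral_sum_sq_mul_sq_sum hX hind h1 h2 h4]
    ring
  have hVarS : Var[S; μ] = N * (m₄ + 3 * (N - 1) * v ^ 2) - (N * v) ^ 2 := by
    rw [variance_eq_sub hS, hES]
    simp only [Pi.pow_apply, S, ← pow_mul]
    rw [integral_pow_four_sum hX hind h1 h2 h4]
  rw [variance_const_mul, variance_fun_sub hQ (hS.const_mul _), variance_const_mul,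
    covariance_const_mul_right, hVarQ, hCov, hVarS]
  field_simp
  ring

lemma measure_abs_sampleVariance_sub_ge_le [IsProbabilityMeasure μ] [Fintype ι]
    (hN : 3 ≤ Fintype.card ι) (hX : ∀ i, MemLp (X i) 4 μ) (hind : iIndepFun X μ)
    (h1 : ∀ i, μ[X i] = 0) (h2 : ∀ i, ∫ ω, X i ω ^ 2 ∂μ = v)
    (h4 : ∀ i, ∫ ω, X i ω ^ 4 ∂μ = m₄) {δ : ℝ} (hδ : 0 < δ) :
    μ {ω | δ ≤ |sampleVariance (fun i => X i ω) - v|} ≤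
      ENNReal.ofReal (m₄ / (δ ^ 2 * Fintype.card ι)) := by
  have hN3 : (3 : ℝ) ≤ Fintype.card ι := by exact_mod_cast hN
  have hvar : Var[fun ω => sampleVariance fun i => X i ω; μ] ≤ m₄ / Fintype.card ι := by
    rw [variance_sampleVariance (by omega) hX hind h1 h2 h4, sub_le_self_iff]
    exact div_nonneg (mul_nonneg (sq_nonneg v) (by linarith)) (by nlinarith)
  calc μ {ω | δ ≤ |sampleVariance (fun i => X i ω) - v|}
      = μ {ω | δ ≤ |(sampleVariance fun i => X i ω) -
          μ[fun ω => sampleVariance fun i => X i ω]|} := by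
        rw [integral_sampleVariance (by omega) (fun i => (hX i).mono_exponent (by norm_num))
          (fun _ _ hij => hind.indepFun hij) h1 h2]
    _ ≤ ENNReal.ofReal (Var[fun ω => sampleVariance fun i => X i ω; μ] / δ ^ 2) :=
        meas_ge_le_variance_div_sq (memLp_sampleVariance hX) hδ
    _ ≤ ENNReal.ofReal (m₄ / (δ ^ 2 * Fintype.card ι)) := by
        rw [mul_comm (δ ^ 2), ← div_div]
        gcongr

end

theorem sample_variance_light_tail_general
    {Ω : Type*} [MeasurableSpace Ω] (μ : Measure Ω) [IsProbabilityMeasure μ]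
    (n : ℕ) (hn : 3 ≤ n) (Y : Fin n → Ω → ℝ) (Y0 : Ω → ℝ)
    (hindep : iIndepFun Y μ)
    (hident : ∀ i, IdentDistrib (Y i) Y0 μ μ)
    (hmom : MemLp Y0 4 μ)
    (hvar : 0 < variance Y0 μ)
    (κ : ℝ) (hκ : κ = (∫ ω, (Y0 ω - ∫ ω', Y0 ω' ∂μ) ^ 4 ∂μ) / (variance Y0 μ) ^ 2)
    (δ : ℝ) (hδ : 0 < δ) :
    μ {ω | δ ≤ |(1 / ((n : ℝ) - 1)) *
        (∑ i, (Y i ω - (1 / (n : ℝ)) * ∑ j, Y j ω) ^ 2) - variance Y0 μ|} ≤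
      ENNReal.ofReal (κ * (variance Y0 μ) ^ 2 / (δ ^ 2 * (n : ℝ))) := by
  set m := ∫ ω, Y0 ω ∂μ
  set v := variance Y0 μ
  set X : Fin n → Ω → ℝ := fun i ω => Y i ω - m
  have hX : ∀ i, MemLp (X i) 4 μ := fun i =>
    ((hident i).symm.memLp_snd hmom).sub (memLp_const m)
  have hind : iIndepFun X μ := hindep.comp _ fun _ => measurable_id.sub_const m
  have hmoment : ∀ (p : ℕ) i, ∫ ω, X i ω ^ p ∂μ = ∫ ω, (Y0 ω - m) ^ p ∂μ := fun p i =>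
    ((hident i).comp ((measurable_id.sub_const m).pow_const p)).integral_eq
  have h1 : ∀ i, μ[X i] = 0 := fun i => by
    simpa [integral_sub (hmom.integrable (by norm_num)) (integrable_const m), m] using hmoment 1 i
  have h2 : ∀ i, ∫ ω, X i ω ^ 2 ∂μ = v := fun i =>
    (hmoment 2 i).trans (variance_eq_integral hmom.aemeasurable).symm
  have hsample : ∀ ω, 1 / ((n : ℝ) - 1) * ∑ i, (Y i ω - 1 / (n : ℝ) * ∑ j, Y j ω) ^ 2 =
      sampleVariance fun i => X i ω := fun ω => by
    rw [sampleVariance_sub_const]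
    simp [sampleVariance]
  have hκv : κ * v ^ 2 = ∫ ω, (Y0 ω - m) ^ 4 ∂μ := by
    rw [hκ, div_mul_cancel₀ _ (pow_pos hvar 2).ne']
  simp_rw [hsample, hκv]
  simpa using measure_abs_sampleVariance_sub_ge_le (by simpa) hX hind h1 h2 (hmoment 4) hδ

/-- Paper's Lemma `LightTail`: a Chebyshev-type concentration bound for the
sample variance estimator of `n ≥ 3` i.i.d. random variables in terms of the
kurtosis `κ = E[(Y − E Y)⁴] / σ⁴`. -/
theorem sample_variance_light_tail
    {Ω : Type*} [MeasurableSpace Ω] (μ : Measure Ω) [IsProbabilityMeasure μ]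
    (n : ℕ) (hn : 3 ≤ n) (Y : Fin n → Ω → ℝ) (Y0 : Ω → ℝ)
    (hmeas : ∀ i, Measurable (Y i)) (hmeas0 : Measurable Y0)
    (hindep : iIndepFun Y μ)
    (hident : ∀ i, IdentDistrib (Y i) Y0 μ μ)
    (hmom : MemLp Y0 4 μ)
    (hvar : 0 < variance Y0 μ)
    (κ : ℝ) (hκ : κ = (∫ ω, (Y0 ω - ∫ ω', Y0 ω' ∂μ) ^ 4 ∂μ) / (variance Y0 μ) ^ 2)
    (δ : ℝ) (hδ : 0 < δ) :
    μ {ω | δ ≤ |(1 / ((n : ℝ) - 1)) *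
        (∑ i, (Y i ω - (1 / (n : ℝ)) * ∑ j, Y j ω) ^ 2) - variance Y0 μ|} ≤
      ENNReal.ofReal (κ * (variance Y0 μ) ^ 2 / (δ ^ 2 * (n : ℝ))) :=
  sample_variance_light_tail_general μ n hn Y Y0 hindep hident hmom hvar κ hκ δ hδ
end
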